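/- Let L = {g_n : n ∈ ℕ} with unary function symbols, A the L-algebra on ℕ where g_n swaps 2n and 2n+1 and fixes everything else, and S(x,y) = {g_n(x)=x, g_n(y)=y : n ≥ 1}. For every finite subset S₀ of the radical Rad_A(S) one has V_A(S₀) ⊄ V_A(x=y) ∪ V_A(x=g₀(y)). Hence A is not geometrically weakly u_ω-compact. -/
import Mathlib


open FirstOrder Language

/-- The language with countably many unary function symbols `g_n`. -/
def Lu : FirstOrder.Language :=
  ⟨fun k => match k with | 1 => ℕ | _ => Empty, fun _ => Empty⟩

/-- `g n` swaps `2n` and `2n+1` and fixes everything else. -/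
def g (n : ℕ) : ℕ → ℕ := fun x =>
  if x = 2 * n then 2 * n + 1 else if x = 2 * n + 1 then 2 * n else x

/-- The `Lu`-algebra `A` on `ℕ` where `g_n` acts as `g n`. -/
instance : Lu.Structure ℕ where
  funMap {k} f v :=
    match k, f, v with
    | 1, n, v => g n (v 0)
    | 0, f, _ => f.elim
    | (_ + 2), f, _ => f.elim
  RelMap {k} r _ := r.elim

/-- The term `g_n(t)`. -/
def ap (n : ℕ) {α : Type} (t : Lu.Term α) : Lu.Term α :=
  Term.func (show Lu.Functions 1 from n) ![t]

/-- The solution set in an `Lu`-algebra `B` of a system of equations. -/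
def solSet (B : Type*) [Lu.Structure B] {n : ℕ}
    (S : Set (Lu.Term (Fin n) × Lu.Term (Fin n))) : Set (Fin n → B) :=
  {v | ∀ p ∈ S, p.1.realize v = p.2.realize v}

/-- The radical of a system `S` over `B`. -/
def rad (B : Type*) [Lu.Structure B] {n : ℕ}
    (S : Set (Lu.Term (Fin n) × Lu.Term (Fin n))) :
    Set (Lu.Term (Fin n) × Lu.Term (Fin n)) :=
  {e | solSet B S ⊆ solSet B {e}}

/-- `B` is geometrically weakly `u_ω`-compact. -/
def geomWeaklyUOmegaCompact (B : Type*) [Lu.Structure B] : Prop :=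
  ∀ (n : ℕ) (S : Set (Lu.Term (Fin n) × Lu.Term (Fin n)))
    (m : ℕ) (t s : Fin m → Lu.Term (Fin n)),
    solSet B S ⊆ (⋃ i, solSet B {(t i, s i)}) →
    (∀ i, ¬solSet B S ⊆ solSet B {(t i, s i)}) →
      ∃ S₀ : Finset (Lu.Term (Fin n) × Lu.Term (Fin n)),
        ↑S₀ ⊆ rad B S ∧ solSet B ↑S₀ ⊆ ⋃ i, solSet B {(t i, s i)}

/-- The system `S(x,y) = {g_n(x) = x, g_n(y) = y : n ≥ 1}`. -/
def S13 : Set (Lu.Term (Fin 2) × Lu.Term (Fin 2)) :=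
  {e | ∃ n : ℕ, 1 ≤ n ∧
    (e = (ap n (Term.var 0), Term.var 0) ∨ e = (ap n (Term.var 1), Term.var 1))}

def tvar : Lu.Term (Fin 2) → Fin 2
  | .var i => i
  | .func (l := 0) f _ => f.elim
  | .func (l := 1) _ ts => tvar (ts 0)
  | .func (l := _+2) f _ => f.elim

def tpar : Lu.Term (Fin 2) → Bool
  | .var _ => false
  | .func (l := 0) f _ => f.elim
  | .func (l := 1) f ts => if (show ℕ from f) = 0 then !tpar (ts 0) else tpar (ts 0)
  | .func (l := _+2) f _ => f.elim

def tbound : Lu.Term (Fin 2) → ℕ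
  | .var _ => 2
  | .func (l := 0) f _ => f.elim
  | .func (l := 1) f ts => max (tbound (ts 0)) (2 * (show ℕ from f) + 2)
  | .func (l := _+2) f _ => f.elim

lemma tkey : ∀ (t : Lu.Term (Fin 2)) (v : Fin 2 → ℕ),
    (v (tvar t) < 2 → t.realize v = (if tpar t then 1 - v (tvar t) else v (tvar t))) ∧
    (tbound t ≤ v (tvar t) → t.realize v = v (tvar t))
  | .var i, v => by simp [tvar, tpar, Term.realize]
  | .func (l := 0) f _, v => f.elim
  | .func (l := 1) f ts, v => by
    have ih := tkey (ts 0) v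
    have hv : tvar (.func (l := 1) f ts) = tvar (ts 0) := rfl
    have hre : (Term.func (l := 1) f ts).realize v = g (show ℕ from f) ((ts 0).realize v) := rfl
    set n : ℕ := show ℕ from f with hn
    constructor
    · intro hlt
      rw [hv] at hlt
      have h1 := ih.1 hlt
      rw [hre, h1]
      by_cases hn0 : n = 0
      · have hp : tpar (.func (l := 1) f ts) = !tpar (ts 0) := by
          simp [tpar, ← hn, hn0]
        rw [hp, hv, hn0]
        rcases (by omega : v (tvar (ts 0)) = 0 ∨ v (tvar (ts 0)) = 1) with h | h <;>
          cases hq : tpar (ts 0) <;> simp [h, g]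
      · have hp : tpar (.func (l := 1) f ts) = tpar (ts 0) := by
          simp [tpar, ← hn, hn0]
        rw [hp, hv]
        have hng : 1 ≤ n := Nat.one_le_iff_ne_zero.mpr hn0
        have hfix : ∀ x : ℕ, x < 2 → g n x = x := fun x hx => by
          simp only [g]; rw [if_neg (by omega), if_neg (by omega)]
        apply hfix
        split <;> omega
    · intro hle
      have hb : max (tbound (ts 0)) (2 * n + 2) ≤ v (tvar (ts 0)) := by
        have : tbound (.func (l := 1) f ts) = max (tbound (ts 0)) (2 * n + 2) := by
          simp [tbound, ← hn]
        rw [← this]; exact hle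
      have h2 := ih.2 (le_trans (le_max_left _ _) hb)
      rw [hre, h2, hv]
      have : 2 * n + 2 ≤ v (tvar (ts 0)) := le_trans (le_max_right _ _) hb
      simp only [g]
      rw [if_neg (by omega), if_neg (by omega)]
  | .func (l := _+2) f _, v => f.elim

lemma g_fix {n x : ℕ} (h1 : x ≠ 2 * n) (h2 : x ≠ 2 * n + 1) : g n x = x := by
  simp [g, h1, h2]

lemma sol_mem (v : Fin 2 → ℕ) (hv : ∀ k, v k < 2) : v ∈ solSet ℕ S13 := by
  rintro p ⟨n, hn, hp | hp⟩ <;> subst hp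
  · show g n (v 0) = v 0
    exact g_fix (by have := hv 0; omega) (by have := hv 0; omega)
  · show g n (v 1) = v 1
    exact g_fix (by have := hv 1; omega) (by have := hv 1; omega)

lemma rad_var {t s : Lu.Term (Fin 2)} (h : (t, s) ∈ rad ℕ S13) : tvar t = tvar s := by
  by_contra hne
  have h1 := h (sol_mem (fun _ => 0) (fun _ => by norm_num)) (t, s) rfl
  have h2 := h (sol_mem (fun k => if k = tvar t then 0 else 1)
      (fun k => by by_cases hk : k = tvar t <;> simp [hk])) (t, s) rfl
  simp only at h1 h2
  rw [(tkey t _).1 (by norm_num), (tkey s _).1 (by norm_num)] at h1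
  rw [(tkey t _).1 (by simp), (tkey s _).1 (by simp [Ne.symm hne])] at h2
  simp [Ne.symm hne] at h2
  cases hp : tpar t <;> cases hq : tpar s <;> simp [hp, hq] at h1 h2

lemma part1 : ∀ S₀ : Finset (Lu.Term (Fin 2) × Lu.Term (Fin 2)), ↑S₀ ⊆ rad ℕ S13 →
    ¬solSet ℕ (↑S₀ : Set _) ⊆
      solSet ℕ {((Term.var 0 : Lu.Term (Fin 2)), Term.var 1)} ∪
        solSet ℕ {((Term.var 0 : Lu.Term (Fin 2)), ap 0 (Term.var 1))} := by
  intro S₀ hsub hcon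
  set B : ℕ := S₀.sup (fun e => max (tbound e.1) (tbound e.2)) + 2 with hB
  set v : Fin 2 → ℕ := fun k => B + k.val with hvdef
  have hvmem : v ∈ solSet ℕ (↑S₀ : Set _) := by
    intro p hp
    have hr := hsub hp
    have hvar := rad_var (t := p.1) (s := p.2) hr
    have hb : max (tbound p.1) (tbound p.2) ≤ B - 2 := by
      simpa [hB] using Finset.le_sup (f := fun e => max (tbound e.1) (tbound e.2)) hp
    have hBv : ∀ k, B ≤ v k := fun k => by simp [hvdef]
    rw [(tkey p.1 v).2 (by have := hBv (tvar p.1); omega),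
        (tkey p.2 v).2 (by have := hBv (tvar p.2); omega), hvar]
  rcases hcon hvmem with hc | hc
  · have := hc ((Term.var 0 : Lu.Term (Fin 2)), (Term.var 1 : Lu.Term (Fin 2))) rfl
    simp only [Term.realize_var, hvdef] at this
    omega
  · have := hc ((Term.var 0 : Lu.Term (Fin 2)), ap 0 (Term.var 1)) rfl
    have hre : ((Term.var 0 : Lu.Term (Fin 2)).realize v : ℕ) = g 0 ((Term.var 1 : Lu.Term (Fin 2)).realize v) := this
    rw [Term.realize_var, Term.realize_var, g_fix (by simp [hvdef]) (by simp [hvdef])] at hre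
    simp [hvdef] at hre

lemma sol_lt {v : Fin 2 → ℕ} (hv : v ∈ solSet ℕ S13) : ∀ k, v k < 2 := by
  intro k
  by_contra hge
  set m : ℕ := v k / 2 with hm
  have hm1 : 1 ≤ m := by omega
  have hcase : v k = 2 * m ∨ v k = 2 * m + 1 := by omega
  have heq : g m (v k) = v k := by
    fin_cases k
    · exact hv (ap m (Term.var 0), Term.var 0) ⟨m, hm1, Or.inl rfl⟩
    · exact hv (ap m (Term.var 1), Term.var 1) ⟨m, hm1, Or.inr rfl⟩
  rcases hcase with h | h <;> rw [h] at heq <;> simp [g] at heq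

/-- For every finite subset `S₀` of `Rad_A(S)` one has
`V_A(S₀) ⊄ V_A(x=y) ∪ V_A(x=g₀(y))`; hence `A` is not geometrically weakly
`u_ω`-compact. -/
theorem stmt13 :
    (∀ S₀ : Finset (Lu.Term (Fin 2) × Lu.Term (Fin 2)), ↑S₀ ⊆ rad ℕ S13 →
      ¬solSet ℕ (↑S₀ : Set _) ⊆
        solSet ℕ {((Term.var 0 : Lu.Term (Fin 2)), Term.var 1)} ∪
          solSet ℕ {((Term.var 0 : Lu.Term (Fin 2)), ap 0 (Term.var 1))}) ∧
      ¬geomWeaklyUOmegaCompact ℕ := by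
  refine ⟨part1, ?_⟩
  intro hcomp
  obtain ⟨S₀, hsub, hcov⟩ := hcomp 2 S13 2
      ![Term.var 0, Term.var 0] ![Term.var 1, ap 0 (Term.var 1)]
    (by
      intro v hv
      have hlt := sol_lt hv
      by_cases h01 : v 0 = v 1
      · refine Set.mem_iUnion.mpr ⟨0, ?_⟩
        rintro p rfl
        exact h01
      · refine Set.mem_iUnion.mpr ⟨1, ?_⟩
        rintro p rfl
        show v 0 = g 0 (v 1)
        have h0 := hlt 0
        have h1 := hlt 1
        have hcase : (v 0 = 0 ∧ v 1 = 1) ∨ (v 0 = 1 ∧ v 1 = 0) := by omega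
        rcases hcase with ⟨ha, hb⟩ | ⟨ha, hb⟩ <;> rw [ha, hb] <;> simp [g])
    (by
      intro i h
      fin_cases i
      · have h2 := h (sol_mem (fun k => (k : ℕ)) (fun k => k.isLt))
          ((Term.var 0 : Lu.Term (Fin 2)), (Term.var 1 : Lu.Term (Fin 2))) rfl
        simp [Term.realize] at h2
      · have h2 := h (sol_mem (fun _ => 0) (fun _ => by norm_num))
          ((Term.var 0 : Lu.Term (Fin 2)), ap 0 (Term.var 1)) rfl
        have h3 : (0 : ℕ) = g 0 0 := h2
        simp [g] at h3)
  refine part1 S₀ hsub (hcov.trans ?_)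
  intro w hw
  rcases Set.mem_iUnion.mp hw with ⟨i, hi⟩
  fin_cases i
  · exact Or.inl hi
  · exact Or.inr hi
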